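/- arXiv:1802.09277 — 10 statements merged into one kernel-verified Lean document; each statement's English description precedes it below -/
import Mathlib

section
/- Let a < b be real numbers, h := b - a, and θ > 0. Let v : ℝ → ℝ be continuously differentiable on [a,b]. Then ∫_a^b ( v'(t) v(t) + θ h (v'(t))^2 ) dt + v(a)^2 = θ h ∫_a^b (v'(t))^2 dt + (1/2)( v(b)^2 + v(a)^2 ), and if v is not identically zero on [a,b], this quantity is strictly positive. (This is the positivity of the quadratic form of the time matrix K_t, Lemma on positivity of K_t and M_t, part 1.) -/
/-- Positivity of the quadratic form of the time matrix `K_t`: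
for `v` continuously differentiable on `[a,b]`, `h = b - a` and `θ > 0`,
`∫_a^b (v' v + θ h v'^2) dt + v(a)^2 = θ h ∫_a^b v'^2 dt + (1/2)(v(b)^2 + v(a)^2)`,
and this quantity is strictly positive if `v` is not identically zero on `[a,b]`. -/
theorem stmt_0 (a b h θ : ℝ) (hab : a < b) (hh : h = b - a) (hθ : 0 < θ)
    (v v' : ℝ → ℝ)
    (hv : ∀ t ∈ Set.Icc a b, HasDerivAt v (v' t) t)
    (hv' : ContinuousOn v' (Set.Icc a b)) :
    (∫ t in a..b, (v' t * v t + θ * h * (v' t) ^ 2)) + (v a) ^ 2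
      = θ * h * (∫ t in a..b, (v' t) ^ 2) + (1 / 2) * ((v b) ^ 2 + (v a) ^ 2) ∧
    ((∃ t ∈ Set.Icc a b, v t ≠ 0) →
      0 < (∫ t in a..b, (v' t * v t + θ * h * (v' t) ^ 2)) + (v a) ^ 2) := by
  have hvc : ContinuousOn v (Set.Icc a b) := fun t ht =>
    (hv t ht).continuousAt.continuousWithinAt
  have hcont1 : ContinuousOn (fun t => v' t * v t) (Set.Icc a b) := hv'.mul hvc
  have hcont2 : ContinuousOn (fun t => (v' t) ^ 2) (Set.Icc a b) := hv'.pow 2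
  have hint1 : IntervalIntegrable (fun t => v' t * v t) MeasureTheory.volume a b :=
    hcont1.intervalIntegrable_of_Icc hab.le
  have hint2 : IntervalIntegrable (fun t => (v' t) ^ 2) MeasureTheory.volume a b :=
    hcont2.intervalIntegrable_of_Icc hab.le
  have hint2' : IntervalIntegrable (fun t => θ * h * (v' t) ^ 2) MeasureTheory.volume a b :=
    (hint2.const_mul (θ * h))
  -- FTC : ∫ v' v = (v b ^ 2 - v a ^ 2) / 2
  have hftc : (∫ t in a..b, (2 : ℝ) * v t ^ 1 * v' t) = v b ^ 2 - v a ^ 2 := by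
    apply intervalIntegral.integral_eq_sub_of_hasDerivAt
    · intro t ht
      rw [Set.uIcc_of_le hab.le] at ht
      exact (hv t ht).pow 2
    · apply ContinuousOn.intervalIntegrable_of_Icc hab.le
      exact (continuousOn_const.mul (hvc.pow 1)).mul hv'
  have hvv : (∫ t in a..b, v' t * v t) = (v b ^ 2 - v a ^ 2) / 2 := by
    have : (∫ t in a..b, (2 : ℝ) * v t ^ 1 * v' t) = 2 * ∫ t in a..b, v' t * v t := by
      rw [← intervalIntegral.integral_const_mul]
      apply intervalIntegral.integral_congr
      intro t _; ring
    rw [this] at hftc; linarith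
  have hsplit : (∫ t in a..b, (v' t * v t + θ * h * (v' t) ^ 2))
      = (∫ t in a..b, v' t * v t) + θ * h * ∫ t in a..b, (v' t) ^ 2 := by
    rw [intervalIntegral.integral_add hint1 hint2', intervalIntegral.integral_const_mul]
  have heq : (∫ t in a..b, (v' t * v t + θ * h * (v' t) ^ 2)) + (v a) ^ 2
      = θ * h * (∫ t in a..b, (v' t) ^ 2) + (1 / 2) * ((v b) ^ 2 + (v a) ^ 2) := by
    rw [hsplit, hvv]; ring
  refine ⟨heq, fun hex => ?_⟩
  rw [heq]
  have hθh : 0 < θ * h := mul_pos hθ (by rw [hh]; linarith)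
  have hInn : 0 ≤ ∫ t in a..b, (v' t) ^ 2 :=
    intervalIntegral.integral_nonneg hab.le (fun t _ => sq_nonneg _)
  by_cases hvz : ∃ t₀ ∈ Set.Icc a b, v' t₀ ≠ 0
  · obtain ⟨t₀, ht₀, ht₀ne⟩ := hvz
    have hpos : (0 : ℝ) < ∫ t in a..b, (v' t) ^ 2 := by
      have := intervalIntegral.integral_lt_integral_of_continuousOn_of_le_of_exists_lt
        (f := fun _ => (0 : ℝ)) (g := fun t => (v' t) ^ 2) hab continuousOn_const hcont2
        (fun t _ => sq_nonneg _) ⟨t₀, ht₀, by positivity⟩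
      simpa using this
    nlinarith [sq_nonneg (v a), sq_nonneg (v b)]
  · push_neg at hvz
    -- v is constant on [a,b]
    have hconst : ∀ t ∈ Set.Icc a b, v t = v a := by
      intro t ht
      apply constant_of_has_deriv_right_zero hvc (fun x hx => ?_) t ht
      have := (hv x (Set.Ico_subset_Icc_self hx)).hasDerivWithinAt (s := Set.Ici x)
      rwa [hvz x (Set.Ico_subset_Icc_self hx)] at this
    obtain ⟨t, ht, htne⟩ := hex
    have hva : v a ≠ 0 := by rw [← hconst t ht]; exact htne
    have : 0 < (v a) ^ 2 := by positivity
    nlinarith [sq_nonneg (v b)]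
end

section
/- Let a < b be real numbers, h := b - a, let C > 0, and let v : ℝ → ℝ be continuously differentiable on [a,b], not identically zero on [a,b], and satisfy the inverse (trace) inequality v(a)^2 ≤ C^2 h^{-1} ∫_a^b v(t)^2 dt. If 0 < θ < 2 C^{-2}, then ∫_a^b ( v(t)^2 + θ h v'(t) v(t) ) dt = ∫_a^b v(t)^2 dt + (θ h / 2)( v(b)^2 - v(a)^2 ) ≥ (1 - C^2 θ / 2) ∫_a^b v(t)^2 dt + (θ h / 2) v(b)^2 > 0. (Lemma on positivity of K_t and M_t, part 2.) -/
open MeasureTheory Set intervalIntegral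

/- Integrating `d/dt (v²/2) = v' v` turns the upwind term of `M_t` into boundary values; the
inverse trace inequality then lets `∫ v²` absorb the term `-(θh/2) v(a)²` as soon as
`C²θ/2 < 1`, and what remains is positive because `v ≢ 0` forces `∫ v² > 0`. -/

theorem integral_deriv_mul_self_eq {a b : ℝ} {v v' : ℝ → ℝ}
    (hv : ∀ t ∈ uIcc a b, HasDerivAt v (v' t) t) (hv' : IntervalIntegrable v' volume a b) :
    ∫ t in a..b, v' t * v t = (v b ^ 2 - v a ^ 2) / 2 := by
  have hderiv : ∀ t ∈ uIcc a b, HasDerivAt (fun s => v s ^ 2 / 2) (v' t * v t) t := fun t ht =>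
    (((hv t ht).fun_pow 2).div_const 2).congr_deriv (by norm_num; ring)
  rw [integral_eq_sub_of_hasDerivAt hderiv
    (hv'.mul_continuousOn (HasDerivAt.continuousOn hv))]
  ring

theorem integral_sq_add_mul_deriv_mul_self {a b : ℝ} {v v' : ℝ → ℝ} (c : ℝ)
    (hv : ∀ t ∈ uIcc a b, HasDerivAt v (v' t) t) (hv' : IntervalIntegrable v' volume a b) :
    ∫ t in a..b, (v t ^ 2 + c * (v' t * v t))
      = (∫ t in a..b, v t ^ 2) + c / 2 * (v b ^ 2 - v a ^ 2) := by
  have hcont : ContinuousOn v (uIcc a b) := HasDerivAt.continuousOn hv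
  rw [integral_add (f := fun t => v t ^ 2) (hcont.pow 2).intervalIntegrable
      ((hv'.mul_continuousOn hcont).const_mul c),
    intervalIntegral.integral_const_mul, integral_deriv_mul_self_eq hv hv']
  ring

theorem integral_sq_pos_of_exists_ne_zero {a b : ℝ} {v : ℝ → ℝ} (hab : a < b)
    (hv : ContinuousOn v (Icc a b)) (hnz : ∃ t ∈ Icc a b, v t ≠ 0) :
    0 < ∫ t in a..b, v t ^ 2 :=
  integral_pos hab (hv.pow 2) (fun _ _ => sq_nonneg _)
    (hnz.imp fun _ ⟨ht, hvt⟩ => ⟨ht, by positivity⟩)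

/-- Positivity of the quadratic form of the time matrix `M_t`:
for `v` continuously differentiable and not identically zero on `[a,b]`, `h = b - a`,
satisfying the trace inverse inequality `v(a)^2 ≤ C^2 h⁻¹ ∫_a^b v^2` with `C > 0`,
and for `0 < θ < 2 C⁻²`, one has
`∫_a^b (v^2 + θ h v' v) dt = ∫_a^b v^2 dt + (θh/2)(v(b)^2 − v(a)^2)
  ≥ (1 − C^2 θ/2) ∫_a^b v^2 dt + (θh/2) v(b)^2 > 0`. -/
theorem stmt_1 (a b h C θ : ℝ) (hab : a < b) (hh : h = b - a) (hC : 0 < C)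
    (v v' : ℝ → ℝ)
    (hv : ∀ t ∈ Set.Icc a b, HasDerivAt v (v' t) t)
    (hv' : ContinuousOn v' (Set.Icc a b))
    (hnz : ∃ t ∈ Set.Icc a b, v t ≠ 0)
    (htrace : (v a) ^ 2 ≤ C ^ 2 * h⁻¹ * ∫ t in a..b, (v t) ^ 2)
    (hθ0 : 0 < θ) (hθ : θ < 2 / C ^ 2) :
    (∫ t in a..b, ((v t) ^ 2 + θ * h * (v' t * v t)))
      = (∫ t in a..b, (v t) ^ 2) + (θ * h / 2) * ((v b) ^ 2 - (v a) ^ 2) ∧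
    (1 - C ^ 2 * θ / 2) * (∫ t in a..b, (v t) ^ 2) + (θ * h / 2) * (v b) ^ 2
      ≤ (∫ t in a..b, (v t) ^ 2) + (θ * h / 2) * ((v b) ^ 2 - (v a) ^ 2) ∧
    0 < (1 - C ^ 2 * θ / 2) * (∫ t in a..b, (v t) ^ 2) + (θ * h / 2) * (v b) ^ 2 := by
  have hv_uIcc : ∀ t ∈ uIcc a b, HasDerivAt v (v' t) t := by rwa [uIcc_of_le hab.le]
  have hI : 0 < ∫ t in a..b, v t ^ 2 :=
    integral_sq_pos_of_exists_ne_zero hab (HasDerivAt.continuousOn hv) hnz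
  have hh0 : 0 < h := by rw [hh]; linarith
  have hCθ : C ^ 2 * θ / 2 < 1 := by
    have := (lt_div_iff₀' (by positivity : (0 : ℝ) < C ^ 2)).1 hθ
    linarith
  have hva : θ * h / 2 * v a ^ 2 ≤ C ^ 2 * θ / 2 * ∫ t in a..b, v t ^ 2 :=
    calc θ * h / 2 * v a ^ 2 ≤ θ * h / 2 * (C ^ 2 * h⁻¹ * ∫ t in a..b, v t ^ 2) := by gcongr
      _ = C ^ 2 * θ / 2 * ∫ t in a..b, v t ^ 2 := by field_simp
  refine ⟨integral_sq_add_mul_deriv_mul_self _ hv_uIcc (hv'.intervalIntegrable_of_Icc hab.le),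
    by linarith, ?_⟩
  have hpos : 0 < (1 - C ^ 2 * θ / 2) * ∫ t in a..b, v t ^ 2 := mul_pos (by linarith) hI
  positivity
end

section
/- Let A and B be real n×n matrices with B positive, and let (λ, z) be a generalized eigenpair of the pencil (A,B). Writing z = x + i y and λ = α + i β, and with a := xᵀAx + yᵀAy, b := xᵀBx + yᵀBy, c := xᵀ(B − Bᵀ)y, d := xᵀ(A − Aᵀ)y, the real and imaginary parts satisfy the linear system b α − c β = a and c α + b β = d; in particular b > 0, so b² + c² > 0 and α = (a b + c d)/(b² + c²). -/
/-!
Taking real and imaginary parts of `A z = λ B z` gives `A x = α Bx − β By` and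
`A y = β Bx + α By`. Pairing the first with `x` and the second with `y` and adding yields
`a = bα − cβ`; pairing crosswise and subtracting yields `d = cα + bβ`, because
`xᵀMᵀy = yᵀMx`. Positivity of `B` and `z ≠ 0` give `b > 0`, and Cramer's rule on the
`2 × 2` system, whose determinant is `b² + c²`, gives `α`.
-/

open Matrix

namespace Matrix

variable {ι : Type*} [Fintype ι]

theorem re_map_ofReal_mulVec (M : Matrix ι ι ℝ) (z : ι → ℂ) (i : ι) :
    ((M.map Complex.ofReal *ᵥ z) i).re = (M *ᵥ fun j => (z j).re) i := by
  simp [mulVec, dotProduct, Complex.re_sum]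

theorem im_map_ofReal_mulVec (M : Matrix ι ι ℝ) (z : ι → ℂ) (i : ι) :
    ((M.map Complex.ofReal *ᵥ z) i).im = (M *ᵥ fun j => (z j).im) i := by
  simp [mulVec, dotProduct, Complex.im_sum]

theorem mulVec_re_im_of_map_ofReal_mulVec_eq_smul {A B : Matrix ι ι ℝ} {lam : ℂ} {z : ι → ℂ}
    (heig : A.map Complex.ofReal *ᵥ z = lam • (B.map Complex.ofReal *ᵥ z)) :
    A *ᵥ (fun j => (z j).re) =
        lam.re • (B *ᵥ fun j => (z j).re) - lam.im • (B *ᵥ fun j => (z j).im) ∧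
      A *ᵥ (fun j => (z j).im) =
        lam.im • (B *ᵥ fun j => (z j).re) + lam.re • (B *ᵥ fun j => (z j).im) := by
  constructor <;> ext i
  · simpa [re_map_ofReal_mulVec, im_map_ofReal_mulVec] using congrArg Complex.re (congrFun heig i)
  · simpa [re_map_ofReal_mulVec, im_map_ofReal_mulVec, add_comm] using
      congrArg Complex.im (congrFun heig i)

theorem add_dotProduct_mulVec_pos {R : Type*} [CommRing R] [PartialOrder R]
    [IsOrderedRing R] {B : Matrix ι ι R} (hB : ∀ v : ι → R, v ≠ 0 → 0 < v ⬝ᵥ (B *ᵥ v))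
    {x y : ι → R} (hxy : x ≠ 0 ∨ y ≠ 0) : 0 < x ⬝ᵥ (B *ᵥ x) + y ⬝ᵥ (B *ᵥ y) := by
  have nonneg (v : ι → R) : 0 ≤ v ⬝ᵥ (B *ᵥ v) := by
    rcases eq_or_ne v 0 with rfl | hv
    · simp
    · exact (hB v hv).le
  rcases hxy with hx | hy
  · exact add_pos_of_pos_of_nonneg (hB x hx) (nonneg y)
  · exact add_pos_of_nonneg_of_pos (nonneg x) (hB y hy)

section Pencil

variable {R : Type*} [CommRing R] {A B : Matrix ι ι R} {x y : ι → R} {α β : R}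

theorem add_dotProduct_mulVec_eq_of_pencil (hAx : A *ᵥ x = α • (B *ᵥ x) - β • (B *ᵥ y))
    (hAy : A *ᵥ y = β • (B *ᵥ x) + α • (B *ᵥ y)) :
    (x ⬝ᵥ (B *ᵥ x) + y ⬝ᵥ (B *ᵥ y)) * α - x ⬝ᵥ ((B - Bᵀ) *ᵥ y) * β =
      x ⬝ᵥ (A *ᵥ x) + y ⬝ᵥ (A *ᵥ y) := by
  rw [hAx, hAy, sub_mulVec, dotProduct_sub, dotProduct_transpose_mulVec]
  simp only [dotProduct_sub, dotProduct_add, dotProduct_smul, smul_eq_mul]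
  ring

theorem dotProduct_sub_transpose_mulVec_eq_of_pencil
    (hAx : A *ᵥ x = α • (B *ᵥ x) - β • (B *ᵥ y))
    (hAy : A *ᵥ y = β • (B *ᵥ x) + α • (B *ᵥ y)) :
    x ⬝ᵥ ((B - Bᵀ) *ᵥ y) * α + (x ⬝ᵥ (B *ᵥ x) + y ⬝ᵥ (B *ᵥ y)) * β =
      x ⬝ᵥ ((A - Aᵀ) *ᵥ y) := by
  rw [sub_mulVec, sub_mulVec, dotProduct_sub, dotProduct_sub, dotProduct_transpose_mulVec,
    dotProduct_transpose_mulVec, hAx, hAy]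
  simp only [dotProduct_sub, dotProduct_add, dotProduct_smul, smul_eq_mul]
  ring

end Pencil

end Matrix

/-- For a generalized eigenpair `(λ, z)` of a real pencil `(A, B)` with `B` positive,
writing `z = x + i y`, `λ = α + i β`, and with
`a = xᵀAx + yᵀAy`, `b = xᵀBx + yᵀBy`, `c = xᵀ(B − Bᵀ)y`, `d = xᵀ(A − Aᵀ)y`,
one has `bα − cβ = a`, `cα + bβ = d`, `b > 0`, `b² + c² > 0` and
`α = (ab + cd)/(b² + c²)`. -/
theorem stmt_2 (n : ℕ) (A B : Matrix (Fin n) (Fin n) ℝ)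
    (hB : ∀ v : Fin n → ℝ, v ≠ 0 → 0 < v ⬝ᵥ (B *ᵥ v))
    (lam : ℂ) (z : Fin n → ℂ) (hz : z ≠ 0)
    (heig : (A.map Complex.ofReal) *ᵥ z = lam • ((B.map Complex.ofReal) *ᵥ z))
    (x y : Fin n → ℝ) (hx : ∀ i, x i = (z i).re) (hy : ∀ i, y i = (z i).im)
    (α β : ℝ) (hα : α = lam.re) (hβ : β = lam.im)
    (a b c d : ℝ)
    (ha : a = x ⬝ᵥ (A *ᵥ x) + y ⬝ᵥ (A *ᵥ y))
    (hb : b = x ⬝ᵥ (B *ᵥ x) + y ⬝ᵥ (B *ᵥ y))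
    (hc : c = x ⬝ᵥ ((B - Bᵀ) *ᵥ y))
    (hd : d = x ⬝ᵥ ((A - Aᵀ) *ᵥ y)) :
    b * α - c * β = a ∧ c * α + b * β = d ∧ 0 < b ∧ 0 < b ^ 2 + c ^ 2 ∧
      α = (a * b + c * d) / (b ^ 2 + c ^ 2) := by
  obtain rfl : x = fun i => (z i).re := funext hx
  obtain rfl : y = fun i => (z i).im := funext hy
  obtain ⟨hAx, hAy⟩ := mulVec_re_im_of_map_ofReal_mulVec_eq_smul heig
  rw [← hα, ← hβ] at hAx hAy
  have hxy : (fun i => (z i).re) ≠ 0 ∨ (fun i => (z i).im) ≠ 0 := by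
    by_contra! h
    exact hz (funext fun i => Complex.ext (congrFun h.1 i) (congrFun h.2 i))
  have e₁ : b * α - c * β = a := by
    rw [ha, hb, hc]; exact add_dotProduct_mulVec_eq_of_pencil hAx hAy
  have e₂ : c * α + b * β = d := by
    rw [hb, hc, hd]; exact dotProduct_sub_transpose_mulVec_eq_of_pencil hAx hAy
  have hb_pos : 0 < b := hb ▸ add_dotProduct_mulVec_pos hB hxy
  have hdet : 0 < b ^ 2 + c ^ 2 := by positivity
  refine ⟨e₁, e₂, hb_pos, hdet, ?_⟩
  rw [eq_div_iff hdet.ne']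
  linear_combination b * e₁ + c * e₂
end

section
/- Let A and B be real symmetric positive definite n×n matrices. Then the geometric mean is symmetric in its arguments: A^{1/2} (A^{−1/2} B A^{−1/2})^{1/2} A^{1/2} = B^{1/2} (B^{−1/2} A B^{−1/2})^{1/2} B^{1/2}, i.e. [A,B]_{1/2} = [B,A]_{1/2}. -/
/-!
Both sides are positive semidefinite solutions `X` of a Riccati equation: `X = SA * GA * SA`
satisfies `X * A⁻¹ * X = B`, and for invertible `X` this is equivalent to `X * B⁻¹ * X = A`,
which `SB * GB * SB` satisfies too. That equation has only one positive semidefinite solution,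
since it makes `SB⁻¹ * X * SB⁻¹` a positive semidefinite square root of `SB⁻¹ * A * SB⁻¹`.
-/

open Matrix

namespace Matrix

variable {n : Type*} [Fintype n] [DecidableEq n]

section CommRing

variable {R : Type*} [CommRing R] {A B M S G : Matrix n n R}

theorem isUnit_det_of_mul_self_eq (hS : S * S = A) (hA : IsUnit A.det) : IsUnit S.det :=
  isUnit_of_mul_isUnit_left (by rwa [← det_mul, hS])

theorem mul_inv_mul_eq_of_mul_self_eq (hS : IsUnit S.det) (hSA : S * S = A)
    (hG : G * G = S⁻¹ * B * S⁻¹) : (S * G * S) * A⁻¹ * (S * G * S) = B := by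
  rw [← hSA, mul_inv_rev]
  calc S * G * S * (S⁻¹ * S⁻¹) * (S * G * S) = S * (G * G) * S := by
        simp only [Matrix.mul_assoc, mul_nonsing_inv_cancel_left _ _ hS,
          nonsing_inv_mul_cancel_left _ _ hS]
    _ = B := by
        simp only [hG, Matrix.mul_assoc, mul_nonsing_inv_cancel_left _ _ hS,
          nonsing_inv_mul _ hS, Matrix.mul_one]

theorem mul_inv_mul_eq_symm (hA : IsUnit A.det) (hB : IsUnit B.det) (h : M * A⁻¹ * M = B) :
    M * B⁻¹ * M = A := by
  have hM : IsUnit M.det := by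
    rw [← h, det_mul, det_mul] at hB
    exact isUnit_of_mul_isUnit_right hB
  rw [← h, mul_inv_rev, mul_inv_rev, nonsing_inv_nonsing_inv _ hA]
  simp only [Matrix.mul_assoc, mul_nonsing_inv_cancel_left _ _ hM, nonsing_inv_mul _ hM,
    Matrix.mul_one]

end CommRing

section RCLike

open scoped ComplexOrder

variable {𝕜 : Type*} [RCLike 𝕜] {A B M S G : Matrix n n 𝕜}

open scoped MatrixOrder in
theorem PosSemidef.eq_of_mul_inv_mul_eq (hS : S.PosSemidef) (hSB : S * S = B)
    (hSu : IsUnit S.det) (hG : G.PosSemidef) (hG2 : G * G = S⁻¹ * A * S⁻¹)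
    (hM : M.PosSemidef) (hMB : M * B⁻¹ * M = A) : M = S * G * S := by
  have hX : (S⁻¹ * M * S⁻¹).PosSemidef := by
    simpa only [hS.inv.1.eq] using hM.mul_mul_conjTranspose_same S⁻¹
  have hX2 : (S⁻¹ * M * S⁻¹) * (S⁻¹ * M * S⁻¹) = G * G := by
    rw [hG2, ← hMB, ← hSB, mul_inv_rev]
    simp only [Matrix.mul_assoc]
  rw [← (CFC.mul_self_eq_mul_self_iff _ _ hX.nonneg hG.nonneg).1 hX2]
  simp only [Matrix.mul_assoc, mul_nonsing_inv_cancel_left _ _ hSu, nonsing_inv_mul _ hSu,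
    Matrix.mul_one]

end RCLike

end Matrix

/-- Symmetry of the geometric mean of two real symmetric positive definite matrices:
`A^{1/2}(A^{−1/2} B A^{−1/2})^{1/2} A^{1/2} = B^{1/2}(B^{−1/2} A B^{−1/2})^{1/2} B^{1/2}`.
The (unique) positive semidefinite square roots are characterized by the hypotheses
`SA * SA = A`, `GA * GA = SA⁻¹ * B * SA⁻¹`, etc. -/
theorem stmt_7 (n : ℕ) (A B : Matrix (Fin n) (Fin n) ℝ)
    (hA : A.PosDef) (hB : B.PosDef)
    (SA SB GA GB : Matrix (Fin n) (Fin n) ℝ)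
    (hSA : SA.PosSemidef) (hSA2 : SA * SA = A)
    (hSB : SB.PosSemidef) (hSB2 : SB * SB = B)
    (hGA : GA.PosSemidef) (hGA2 : GA * GA = SA⁻¹ * B * SA⁻¹)
    (hGB : GB.PosSemidef) (hGB2 : GB * GB = SB⁻¹ * A * SB⁻¹) :
    SA * GA * SA = SB * GB * SB := by
  have hAu : IsUnit A.det := hA.det_pos.ne'.isUnit
  have hBu : IsUnit B.det := hB.det_pos.ne'.isUnit
  have hM : (SA * GA * SA).PosSemidef := by
    simpa only [hSA.1.eq] using hGA.mul_mul_conjTranspose_same SA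
  have hRiccati : (SA * GA * SA) * A⁻¹ * (SA * GA * SA) = B :=
    mul_inv_mul_eq_of_mul_self_eq (isUnit_det_of_mul_self_eq hSA2 hAu) hSA2 hGA2
  exact hSB.eq_of_mul_inv_mul_eq hSB2 (isUnit_det_of_mul_self_eq hSB2 hBu) hGB hGB2 hM
    (mul_inv_mul_eq_symm hAu hBu hRiccati)
end

section
/- Let K be a real symmetric positive definite n×n matrix, M a real symmetric positive semidefinite n×n matrix, and β ∈ ℝ. Define the Schur complement R := K + β² M K⁻¹ M. Then the geometric mean [K,R]_{1/2} := K^{1/2}(K^{−1/2} R K^{−1/2})^{1/2} K^{1/2} satisfies the two-sided Loewner bound (1/√2)(K + |β| M) ≼ [K,R]_{1/2} ≼ K + |β| M. -/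
/-!
Whiten by `K^{1/2}`: with `A = |β| K^{-1/2} M K^{-1/2} ≽ 0`, the whitened Schur complement is
`K^{-1/2} R K^{-1/2} = 1 + A²`, whose square root is `G`. Since `(1 + A)² - (1 + A²) = 2A ≽ 0` and
`(1 + A²) - (1 + A)² / 2 = (1 - A)² / 2 ≽ 0`, operator monotonicity of the square root
(`S² ≼ T² → S ≼ T` for `S, T ≽ 0`, proved with an eigenvector of `T - S`) gives
`(1 + A) / √2 ≼ G ≼ 1 + A`, and congruence by `K^{1/2}` carries this back to `K + |β| M`.
-/

open Matrix
open scoped MatrixOrder ComplexOrder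

namespace Matrix

variable {𝕜 n : Type*} [RCLike 𝕜] [Fintype n] [DecidableEq n]

theorem PosSemidef.le_of_mul_self_le {S T : Matrix n n 𝕜} (hS : S.PosSemidef)
    (hT : T.PosSemidef) (h : S * S ≤ T * T) : S ≤ T := by
  have hD : (T - S).IsHermitian := hT.1.sub hS.1
  refine hD.posSemidef_iff_eigenvalues_nonneg.mpr fun i => ?_
  set lam := hD.eigenvalues i
  set v : n → 𝕜 := ⇑(hD.eigenvectorBasis i)
  have hv : v ≠ 0 := fun h0 => hD.eigenvectorBasis.orthonormal.ne_zero i (by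
    ext j; exact congrFun h0 j)
  have heig : (T - S) *ᵥ v = (lam : 𝕜) • v := by
    rw [hD.mulVec_eigenvectorBasis i, RCLike.real_smul_eq_coe_smul (K := 𝕜)]
  -- `T² - S² = T (T - S) + (T - S) S`, and `T - S` acts on `v` as `lam` from both sides
  have key : star v ⬝ᵥ ((T * T - S * S) *ᵥ v) =
      (lam : 𝕜) * (star v ⬝ᵥ (T *ᵥ v) + star v ⬝ᵥ (S *ᵥ v)) := by
    have hsplit : T * T - S * S = T * (T - S) + (T - S) * S := by noncomm_ring
    have hleft : star v ᵥ* (T - S) = (lam : 𝕜) • star v := by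
      rw [← hD.eq, ← star_mulVec, heig, star_smul, RCLike.star_def, RCLike.conj_ofReal]
    rw [hsplit, add_mulVec, dotProduct_add, ← mulVec_mulVec, ← mulVec_mulVec, heig,
      dotProduct_mulVec (star v) (T - S), hleft, mulVec_smul, dotProduct_smul, smul_dotProduct,
      smul_eq_mul, smul_eq_mul, mul_add]
  have hTv := hT.dotProduct_mulVec_nonneg v
  have hSv := hS.dotProduct_mulVec_nonneg v
  have hprod : 0 ≤ (lam : 𝕜) * (star v ⬝ᵥ (T *ᵥ v) + star v ⬝ᵥ (S *ᵥ v)) :=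
    key ▸ h.dotProduct_mulVec_nonneg v
  by_contra hneg
  have hlam : lam < 0 := not_le.mp hneg
  have hzero : (lam : 𝕜) * (star v ⬝ᵥ (T *ᵥ v) + star v ⬝ᵥ (S *ᵥ v)) = 0 := by
    refine le_antisymm ?_ hprod
    have := mul_nonneg (RCLike.ofReal_nonneg.mpr (neg_nonneg.mpr hlam.le)) (add_nonneg hTv hSv)
    rw [RCLike.ofReal_neg, neg_mul] at this
    exact neg_nonneg.mp this
  obtain ⟨hT0, hS0⟩ := (add_eq_zero_iff_of_nonneg hTv hSv).mp
    ((mul_eq_zero.mp hzero).resolve_left (RCLike.ofReal_ne_zero.mpr hlam.ne))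
  have : (lam : 𝕜) • v = 0 := by
    rw [← heig, sub_mulVec, (hT.dotProduct_mulVec_zero_iff v).mp hT0,
      (hS.dotProduct_mulVec_zero_iff v).mp hS0, sub_zero]
  exact hv ((smul_eq_zero.mp this).resolve_left (RCLike.ofReal_ne_zero.mpr hlam.ne))

theorem le_one_add_of_mul_self_eq_one_add_mul_self {A G : Matrix n n 𝕜} (hA : A.PosSemidef)
    (hG : G.PosSemidef) (hGG : G * G = 1 + A * A) : G ≤ 1 + A := by
  refine hG.le_of_mul_self_le (PosSemidef.one.add hA) ?_
  change ((1 + A) * (1 + A) - G * G).PosSemidef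
  rw [hGG, show (1 + A) * (1 + A) - (1 + A * A) = A + A by noncomm_ring]
  exact hA.add hA

theorem inv_sqrt_two_smul_one_add_le_of_mul_self_eq_one_add_mul_self {A G : Matrix n n 𝕜}
    (hA : A.PosSemidef) (hG : G.PosSemidef) (hGG : G * G = 1 + A * A) :
    (1 / Real.sqrt 2) • (1 + A) ≤ G := by
  have hc : (0 : ℝ) ≤ 1 / Real.sqrt 2 := by positivity
  refine ((PosSemidef.one.add hA).smul hc).le_of_mul_self_le hG ?_
  change (G * G - (1 / Real.sqrt 2) • (1 + A) * (1 / Real.sqrt 2) • (1 + A)).PosSemidef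
  have hhalf : 1 / Real.sqrt 2 * (1 / Real.sqrt 2) = 1 / 2 := by
    rw [div_mul_div_comm, one_mul, Real.mul_self_sqrt zero_le_two]
  have hdiff : G * G - (1 / Real.sqrt 2) • (1 + A) * (1 / Real.sqrt 2) • (1 + A) =
      (1 / 2 : ℝ) • ((1 - A)ᴴ * (1 - A)) := by
    rw [smul_mul_smul_comm, hhalf, hGG, conjTranspose_sub, conjTranspose_one, hA.1.eq]
    have e1 : (1 + A) * (1 + A) = 1 + A + A + A * A := by noncomm_ring
    have e2 : (1 - A) * (1 - A) = 1 - A - A + A * A := by noncomm_ring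
    rw [e1, e2]
    module
  rw [hdiff]
  exact (posSemidef_conjTranspose_mul_self _).smul (by norm_num)

section Whitening

variable {R : Type*} [CommRing R] {S : Matrix n n R}

theorem nonsing_inv_mul_add_sq_smul_mul_inv_mul_mul_nonsing_inv (hS : IsUnit S.det)
    (M : Matrix n n R) (c : R) :
    S⁻¹ * (S * S + c ^ 2 • (M * (S * S)⁻¹ * M)) * S⁻¹ =
      1 + (c • (S⁻¹ * M * S⁻¹)) * (c • (S⁻¹ * M * S⁻¹)) := by
  have hSS : S⁻¹ * (S * S) * S⁻¹ = 1 := by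
    rw [nonsing_inv_mul_cancel_left _ _ hS, mul_nonsing_inv _ hS]
  rw [Matrix.mul_add, Matrix.add_mul, hSS, Matrix.mul_inv_rev, Matrix.mul_smul, Matrix.smul_mul,
    smul_mul_smul_comm, sq c]
  simp only [Matrix.mul_assoc]

theorem mul_one_add_smul_nonsing_inv_mul_mul_nonsing_inv_mul (hS : IsUnit S.det)
    (M : Matrix n n R) (c : R) :
    S * (1 + c • (S⁻¹ * M * S⁻¹)) * S = S * S + c • M := by
  rw [Matrix.mul_add, Matrix.add_mul, Matrix.mul_one, Matrix.mul_smul, Matrix.smul_mul]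
  simp only [Matrix.mul_assoc, mul_nonsing_inv_cancel_left _ _ hS, nonsing_inv_mul _ hS,
    Matrix.mul_one]

end Whitening

end Matrix

/-- For `K` real symmetric positive definite, `M` real symmetric positive semidefinite,
`β ∈ ℝ` and the Schur complement `R = K + β² M K⁻¹ M`, the geometric mean
`[K,R]_{1/2} = K^{1/2}(K^{−1/2} R K^{−1/2})^{1/2} K^{1/2}` satisfies
`(1/√2)(K + |β| M) ≼ [K,R]_{1/2} ≼ K + |β| M` in the Loewner order.
The positive semidefinite square roots are characterized by
`SK * SK = K` and `G * G = SK⁻¹ * R * SK⁻¹`. -/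
theorem stmt_9 (n : ℕ) (K M : Matrix (Fin n) (Fin n) ℝ)
    (hK : K.PosDef) (hM : M.PosSemidef) (β : ℝ)
    (R : Matrix (Fin n) (Fin n) ℝ) (hR : R = K + β ^ 2 • (M * K⁻¹ * M))
    (SK G : Matrix (Fin n) (Fin n) ℝ)
    (hSK : SK.PosSemidef) (hSK2 : SK * SK = K)
    (hG : G.PosSemidef) (hG2 : G * G = SK⁻¹ * R * SK⁻¹) :
    ((SK * G * SK) - (1 / Real.sqrt 2) • (K + |β| • M)).PosSemidef ∧
    ((K + |β| • M) - SK * G * SK).PosSemidef := by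
  subst hSK2 hR
  have hSK_det : IsUnit SK.det :=
    (isUnit_iff_isUnit_det SK).mp (isUnit_of_mul_isUnit_left hK.isUnit)
  set A := |β| • (SK⁻¹ * M * SK⁻¹)
  have hA : A.PosSemidef := by
    have := hM.conjTranspose_mul_mul_same SK⁻¹
    rw [conjTranspose_nonsing_inv, hSK.1.eq] at this
    exact this.smul (abs_nonneg β)
  have hGG : G * G = 1 + A * A := by
    rw [hG2, ← sq_abs, nonsing_inv_mul_add_sq_smul_mul_inv_mul_mul_nonsing_inv hSK_det]
  have hconj := mul_one_add_smul_nonsing_inv_mul_mul_nonsing_inv_mul hSK_det M |β|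
  constructor
  · have := conjugate_le_conjugate_of_nonneg
      (inv_sqrt_two_smul_one_add_le_of_mul_self_eq_one_add_mul_self hA hG hGG) hSK.nonneg
    rwa [Matrix.mul_smul, Matrix.smul_mul, hconj] at this
  · have := conjugate_le_conjugate_of_nonneg
      (le_one_add_of_mul_self_eq_one_add_mul_self hA hG hGG) hSK.nonneg
    rwa [hconj] at this
end

section
/- Let K_x and M_x be real symmetric positive definite n×n matrices, α > 0 and β ∈ ℝ, and set 𝒦 := K_x + α M_x. Define the 2n×2n block matrices Ā := [[𝒦, β M_x], [β M_x, −𝒦]] and P := [[𝒦 + |β| M_x, 0], [0, 𝒦 + |β| M_x]]. Then every generalized eigenvalue λ of the pencil (Ā, P), i.e. every λ ∈ ℝ such that Ā u = λ P u for some nonzero u ∈ ℝ^{2n}, satisfies 1/√2 ≤ |λ| ≤ 1; consequently the condition number of P⁻¹Ā in the P-norm is at most √2. (Theorem on the preconditioner for the diagonalization case, in the sharpened form of the accompanying Remark.) -/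
/-!
Write an eigenvector as `u = (x, y)`, let `Q = 𝒦 + |β| M` and `q = xᵀQx + yᵀQy > 0`.
Testing the two block equations against `x` and `y` respectively and adding gives
`λ q = xᵀ𝒦x - yᵀ𝒦y + 2β xᵀMy`, and `2 |xᵀMy| ≤ xᵀMx + yᵀMy` bounds its right side by `q`,
so `|λ| ≤ 1`. Testing them crosswise gives `a = λ (xᵀQx - yᵀQy)` and `β m = 2λ xᵀQy`, where
`a = xᵀ𝒦x + yᵀ𝒦y` and `m = xᵀMx + yᵀMy`. Squaring and adding, Cauchy–Schwarz for `Q` yields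
`a² + β² m² ≤ λ² q²`, while `q = a + |β| m ≤ √(2 (a² + β² m²))`; hence `λ² ≥ 1/2`.
-/

open Matrix

namespace Matrix

variable {ι : Type*} [Fintype ι]

lemma IsSymm.dotProduct_mulVec_comm {M : Matrix ι ι ℝ} (hM : M.IsSymm) (x y : ι → ℝ) :
    x ⬝ᵥ M *ᵥ y = y ⬝ᵥ M *ᵥ x := by
  rw [← dotProduct_transpose_mulVec, hM.eq]

lemma PosSemidef.dotProduct_mulVec_comm {M : Matrix ι ι ℝ} (hM : M.PosSemidef) (x y : ι → ℝ) :
    x ⬝ᵥ M *ᵥ y = y ⬝ᵥ M *ᵥ x :=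
  (isHermitian_iff_isSymm.mp hM.isHermitian).dotProduct_mulVec_comm x y

lemma PosSemidef.dotProduct_mulVec_sq_le {Q : Matrix ι ι ℝ} (hQ : Q.PosSemidef) (x y : ι → ℝ) :
    (x ⬝ᵥ Q *ᵥ y) ^ 2 ≤ (x ⬝ᵥ Q *ᵥ x) * (y ⬝ᵥ Q *ᵥ y) := by
  have hdisc := discrim_le_zero (K := ℝ) (a := y ⬝ᵥ Q *ᵥ y) (b := 2 * (x ⬝ᵥ Q *ᵥ y))
    (c := x ⬝ᵥ Q *ᵥ x) fun t => by
      have := hQ.dotProduct_mulVec_nonneg (x + t • y)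
      simp only [star_trivial, mulVec_add, mulVec_smul, dotProduct_add, add_dotProduct,
        dotProduct_smul, smul_dotProduct, smul_eq_mul, hQ.dotProduct_mulVec_comm y x] at this
      linarith
  rw [discrim] at hdisc
  linarith

lemma PosSemidef.two_mul_abs_dotProduct_mulVec_le {M : Matrix ι ι ℝ} (hM : M.PosSemidef)
    (x y : ι → ℝ) : 2 * |x ⬝ᵥ M *ᵥ y| ≤ x ⬝ᵥ M *ᵥ x + y ⬝ᵥ M *ᵥ y := by
  have hx := hM.dotProduct_mulVec_nonneg x
  have hy := hM.dotProduct_mulVec_nonneg y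
  simp only [star_trivial] at hx hy
  have hcs := hM.dotProduct_mulVec_sq_le x y
  rw [← abs_two, ← abs_mul]
  exact abs_le_of_sq_le_sq (by nlinarith [sq_nonneg (x ⬝ᵥ M *ᵥ x - y ⬝ᵥ M *ᵥ y)]) (by positivity)

lemma PosDef.dotProduct_mulVec_add_pos {Q : Matrix ι ι ℝ} (hQ : Q.PosDef) {x y : ι → ℝ}
    (h : x ≠ 0 ∨ y ≠ 0) : 0 < x ⬝ᵥ Q *ᵥ x + y ⬝ᵥ Q *ᵥ y := by
  have hx := hQ.posSemidef.dotProduct_mulVec_nonneg x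
  have hy := hQ.posSemidef.dotProduct_mulVec_nonneg y
  simp only [star_trivial] at hx hy
  rcases h with h | h
  · simpa using add_pos_of_pos_of_nonneg (hQ.dotProduct_mulVec_pos h) hy
  · simpa using add_pos_of_nonneg_of_pos hx (hQ.dotProduct_mulVec_pos h)

lemma fromBlocks_mulVec_eq_smul_fromBlocks_mulVec {m n R : Type*} [Fintype m] [Fintype n]
    [Semiring R] {A E : Matrix m m R} {B : Matrix m n R} {C : Matrix n m R} {D F : Matrix n n R}
    {u : m ⊕ n → R} {lam : R} (h : fromBlocks A B C D *ᵥ u = lam • (fromBlocks E 0 0 F *ᵥ u)) :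
    A *ᵥ (u ∘ Sum.inl) + B *ᵥ (u ∘ Sum.inr) = lam • (E *ᵥ (u ∘ Sum.inl)) ∧
      C *ᵥ (u ∘ Sum.inl) + D *ᵥ (u ∘ Sum.inr) = lam • (F *ᵥ (u ∘ Sum.inr)) := by
  rw [fromBlocks_mulVec, fromBlocks_mulVec] at h
  exact ⟨funext fun i => by simpa using congrFun h (.inl i),
    funext fun i => by simpa using congrFun h (.inr i)⟩

end Matrix

section Pencil

variable {ι : Type*} [Fintype ι] {K M : Matrix ι ι ℝ} {β lam : ℝ} {x y : ι → ℝ}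

lemma abs_le_one_of_pencil_eigen (hK : K.PosSemidef) (hM : M.PosSemidef)
    (h₁ : K *ᵥ x + (β • M) *ᵥ y = lam • ((K + |β| • M) *ᵥ x))
    (h₂ : (β • M) *ᵥ x + (-K) *ᵥ y = lam • ((K + |β| • M) *ᵥ y))
    (hq : 0 < x ⬝ᵥ (K + |β| • M) *ᵥ x + y ⬝ᵥ (K + |β| • M) *ᵥ y) :
    |lam| ≤ 1 := by
  have e₁ := congrArg (x ⬝ᵥ ·) h₁
  have e₂ := congrArg (y ⬝ᵥ ·) h₂
  simp only [add_mulVec, smul_mulVec, neg_mulVec, dotProduct_add, dotProduct_smul,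
    dotProduct_neg, smul_eq_mul, hM.dotProduct_mulVec_comm y x] at e₁ e₂ hq
  have hkx := hK.dotProduct_mulVec_nonneg x
  have hky := hK.dotProduct_mulVec_nonneg y
  simp only [star_trivial] at hkx hky
  set q := x ⬝ᵥ K *ᵥ x + |β| * x ⬝ᵥ M *ᵥ x + (y ⬝ᵥ K *ᵥ y + |β| * y ⬝ᵥ M *ᵥ y) with hq_def
  have hrayleigh : lam * q = x ⬝ᵥ K *ᵥ x - y ⬝ᵥ K *ᵥ y + 2 * β * x ⬝ᵥ M *ᵥ y := by linarith
  have hcross : |2 * β * x ⬝ᵥ M *ᵥ y| ≤ |β| * (x ⬝ᵥ M *ᵥ x + y ⬝ᵥ M *ᵥ y) := by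
    rw [mul_comm 2, mul_assoc, abs_mul, abs_mul, abs_two]
    exact mul_le_mul_of_nonneg_left (hM.two_mul_abs_dotProduct_mulVec_le x y) (abs_nonneg β)
  have hbound : |lam| * q ≤ 1 * q :=
    calc |lam| * q = |x ⬝ᵥ K *ᵥ x - y ⬝ᵥ K *ᵥ y + 2 * β * x ⬝ᵥ M *ᵥ y| := by
          rw [← hrayleigh, abs_mul, abs_of_pos hq]
      _ ≤ 1 * q := by
          rw [abs_le] at hcross ⊢
          constructor <;> linarith
  exact le_of_mul_le_mul_right hbound hq

lemma half_le_sq_of_pencil_eigen (hK : K.PosSemidef) (hM : M.PosSemidef)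
    (h₁ : K *ᵥ x + (β • M) *ᵥ y = lam • ((K + |β| • M) *ᵥ x))
    (h₂ : (β • M) *ᵥ x + (-K) *ᵥ y = lam • ((K + |β| • M) *ᵥ y))
    (hq : 0 < x ⬝ᵥ (K + |β| • M) *ᵥ x + y ⬝ᵥ (K + |β| • M) *ᵥ y) :
    1 / 2 ≤ lam ^ 2 := by
  have hcs := (hK.add (hM.smul (abs_nonneg β))).dotProduct_mulVec_sq_le x y
  have e₁ := congrArg (x ⬝ᵥ ·) h₁
  have e₂ := congrArg (y ⬝ᵥ ·) h₂
  have e₃ := congrArg (y ⬝ᵥ ·) h₁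
  have e₄ := congrArg (x ⬝ᵥ ·) h₂
  simp only [add_mulVec, smul_mulVec, neg_mulVec, dotProduct_add, dotProduct_smul,
    dotProduct_neg, smul_eq_mul, hM.dotProduct_mulVec_comm y x,
    hK.dotProduct_mulVec_comm y x] at e₁ e₂ e₃ e₄ hq hcs
  set a := x ⬝ᵥ K *ᵥ x + y ⬝ᵥ K *ᵥ y
  set m := x ⬝ᵥ M *ᵥ x + y ⬝ᵥ M *ᵥ y
  set qx := x ⬝ᵥ K *ᵥ x + |β| * x ⬝ᵥ M *ᵥ x
  set qy := y ⬝ᵥ K *ᵥ y + |β| * y ⬝ᵥ M *ᵥ y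
  set qxy := x ⬝ᵥ K *ᵥ y + |β| * x ⬝ᵥ M *ᵥ y
  have hdiff : a = lam * (qx - qy) := by linarith
  have hmix : β * m = 2 * lam * qxy := by linarith
  have hsum : qx + qy = a + |β| * m := by simp only [a, m, qx, qy]; ring
  have hq2 : (qx + qy) ^ 2 ≤ 2 * lam ^ 2 * (qx + qy) ^ 2 :=
    calc (qx + qy) ^ 2 ≤ 2 * (a ^ 2 + (β * m) ^ 2) := by
          rw [hsum, mul_pow, ← sq_abs β]; nlinarith [sq_nonneg (a - |β| * m)]
      _ = 2 * lam ^ 2 * ((qx - qy) ^ 2 + 4 * qxy ^ 2) := by rw [hdiff, hmix]; ring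
      _ ≤ 2 * lam ^ 2 * (qx + qy) ^ 2 := by gcongr; nlinarith
  have := le_of_mul_le_mul_right (by linarith : 1 * (qx + qy) ^ 2 ≤ 2 * lam ^ 2 * (qx + qy) ^ 2)
    (pow_pos hq 2)
  linarith

lemma pencil_eigenvalue_bounds (hK : K.PosDef) (hM : M.PosSemidef) {u : ι ⊕ ι → ℝ} (hu : u ≠ 0)
    (heig : fromBlocks K (β • M) (β • M) (-K) *ᵥ u =
      lam • (fromBlocks (K + |β| • M) 0 0 (K + |β| • M) *ᵥ u)) :
    1 / Real.sqrt 2 ≤ |lam| ∧ |lam| ≤ 1 := by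
  obtain ⟨h₁, h₂⟩ := fromBlocks_mulVec_eq_smul_fromBlocks_mulVec heig
  have hq := (hK.add_posSemidef (hM.smul (abs_nonneg β))).dotProduct_mulVec_add_pos
    (x := u ∘ Sum.inl) (y := u ∘ Sum.inr) <| by
      contrapose! hu
      rw [← Sum.elim_comp_inl_inr u, hu.1, hu.2, Sum.elim_zero_zero]
  refine ⟨?_, abs_le_one_of_pencil_eigen hK.posSemidef hM h₁ h₂ hq⟩
  rw [← Real.sqrt_sq_eq_abs, one_div, ← Real.sqrt_inv, ← one_div]
  exact Real.sqrt_le_sqrt (half_le_sq_of_pencil_eigen hK.posSemidef hM h₁ h₂ hq)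

end Pencil

/-- Preconditioner for the diagonalization case (sharpened form): with
`𝒦 = K_x + α M_x`, `Ā = [[𝒦, β M_x],[β M_x, −𝒦]]` and
`P = diag(𝒦 + |β| M_x, 𝒦 + |β| M_x)`, every generalized eigenvalue `λ` of the pencil
`(Ā, P)` satisfies `1/√2 ≤ |λ| ≤ 1`; consequently the ratio of the absolute values of
any two generalized eigenvalues is at most `√2`, i.e. `cond_P(P⁻¹Ā) ≤ √2`. -/
theorem stmt_10 (n : ℕ) (Kx Mx : Matrix (Fin n) (Fin n) ℝ)
    (hKx : Kx.PosDef) (hMx : Mx.PosDef) (α β : ℝ) (hα : 0 < α)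
    (𝒦 : Matrix (Fin n) (Fin n) ℝ) (h𝒦 : 𝒦 = Kx + α • Mx)
    (Abar P : Matrix (Fin n ⊕ Fin n) (Fin n ⊕ Fin n) ℝ)
    (hAbar : Abar = Matrix.fromBlocks 𝒦 (β • Mx) (β • Mx) (-𝒦))
    (hP : P = Matrix.fromBlocks (𝒦 + |β| • Mx) 0 0 (𝒦 + |β| • Mx)) :
    (∀ lam : ℝ, (∃ u : Fin n ⊕ Fin n → ℝ, u ≠ 0 ∧ Abar *ᵥ u = lam • (P *ᵥ u)) →
      1 / Real.sqrt 2 ≤ |lam| ∧ |lam| ≤ 1) ∧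
    (∀ lam mu : ℝ,
      (∃ u : Fin n ⊕ Fin n → ℝ, u ≠ 0 ∧ Abar *ᵥ u = lam • (P *ᵥ u)) →
      (∃ u : Fin n ⊕ Fin n → ℝ, u ≠ 0 ∧ Abar *ᵥ u = mu • (P *ᵥ u)) →
      |lam| ≤ Real.sqrt 2 * |mu|) := by
  have h𝒦_pos : 𝒦.PosDef := h𝒦 ▸ hKx.add_posSemidef (hMx.posSemidef.smul hα.le)
  have bounds : ∀ lam : ℝ, (∃ u : Fin n ⊕ Fin n → ℝ, u ≠ 0 ∧ Abar *ᵥ u = lam • (P *ᵥ u)) →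
      1 / Real.sqrt 2 ≤ |lam| ∧ |lam| ≤ 1 := by
    rintro lam ⟨u, hu, heig⟩
    rw [hAbar, hP] at heig
    exact pencil_eigenvalue_bounds h𝒦_pos hMx.posSemidef hu heig
  refine ⟨bounds, fun lam mu hlam hmu => ?_⟩
  calc |lam| ≤ 1 := (bounds lam hlam).2
    _ = Real.sqrt 2 * (1 / Real.sqrt 2) := by field_simp
    _ ≤ Real.sqrt 2 * |mu| := by gcongr; exact (bounds mu hmu).1
end

section
/- Let K_x and M_x be real symmetric positive definite n×n matrices, α > 0, and let β₁, β₂ be nonzero real numbers of opposite sign (β₁β₂ < 0). Set 𝒦 := K_x + α M_x and γ := √(|β₁β₂|). Define the 2n×2n block matrices Ā := [[|β₂| 𝒦, −β₁|β₂| M_x], [|β₁|β₂ M_x, −|β₁| 𝒦]] and P := [[|β₂|(𝒦 + γ M_x), 0], [0, |β₁|(𝒦 + γ M_x)]]. Then every generalized eigenvalue λ of the pencil (Ā, P), i.e. every λ ∈ ℝ with Ā u = λ P u for some nonzero u ∈ ℝ^{2n}, satisfies 1/√2 ≤ |λ| ≤ 1; consequently cond(P⁻¹Ā) ≤ √2.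 (Theorem on the preconditioner for the real Schur decomposition case.) -/
/-!
Substituting `y ↦ (-β₁/γ) y` and dividing the block rows by `|β₂|` and `|β₁|` turns the pencil
`(Ā, P)` into the symmetric pencil `([[G, H], [H, -G]], diag(W, W))` with `G = 𝒦`, `H = γ M_x`,
`W = G + H`. For an eigenvector `(x, y)` with `N = xᵀWx + yᵀWy > 0`, testing the two block
equations against `x` and `y` gives
`(1 - λ) N = 2 yᵀGy + (x - y)ᵀH(x - y)` and `(1 + λ) N = 2 xᵀGx + (x + y)ᵀH(x + y)`,
hence `|λ| ≤ 1`, and `(4λ² - 2) N = q_W((2λ - 1)x - y) + q_W((2λ + 1)y - x)` for the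
quadratic form `q_W` of `W`, hence `λ² ≥ 1/2`.
-/

open Matrix

variable {ι : Type*} [Fintype ι]

lemma Matrix.IsHermitian.dotProduct_mulVec_comm {G : Matrix ι ι ℝ} (hG : G.IsHermitian)
    (v w : ι → ℝ) : v ⬝ᵥ (G *ᵥ w) = w ⬝ᵥ (G *ᵥ v) := by
  rw [dotProduct_mulVec, ← mulVec_transpose, dotProduct_comm]
  congr 2

lemma Matrix.PosDef.dotProduct_mulVec_add_pos_s11 {W : Matrix ι ι ℝ} (hW : W.PosDef)
    {x y : ι → ℝ} (hxy : x ≠ 0 ∨ y ≠ 0) : 0 < x ⬝ᵥ (W *ᵥ x) + y ⬝ᵥ (W *ᵥ y) := by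
  have qx := hW.posSemidef.dotProduct_mulVec_nonneg x
  have qy := hW.posSemidef.dotProduct_mulVec_nonneg y
  rw [star_trivial] at qx qy
  rcases hxy with hx | hy
  · exact add_pos_of_pos_of_nonneg (by simpa using hW.dotProduct_mulVec_pos hx) qy
  · exact add_pos_of_nonneg_of_pos qx (by simpa using hW.dotProduct_mulVec_pos hy)

section SymmetricPencil

variable {G H : Matrix ι ι ℝ} {x y : ι → ℝ} {lam : ℝ}

lemma abs_le_one_of_symmPencil (hG : G.PosSemidef) (hH : H.PosSemidef)
    (h₁ : G *ᵥ x + H *ᵥ y = lam • ((G + H) *ᵥ x))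
    (h₂ : H *ᵥ x - G *ᵥ y = lam • ((G + H) *ᵥ y))
    (hN : 0 < x ⬝ᵥ ((G + H) *ᵥ x) + y ⬝ᵥ ((G + H) *ᵥ y)) : |lam| ≤ 1 := by
  have e₁ := congrArg (x ⬝ᵥ ·) h₁
  have e₂ := congrArg (y ⬝ᵥ ·) h₂
  have qGx := hG.dotProduct_mulVec_nonneg x
  have qGy := hG.dotProduct_mulVec_nonneg y
  have qHp := hH.dotProduct_mulVec_nonneg (x + y)
  have qHm := hH.dotProduct_mulVec_nonneg (x - y)
  simp only [star_trivial, dotProduct_add, dotProduct_sub, dotProduct_smul, add_mulVec,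
    mulVec_add, mulVec_sub, add_dotProduct, sub_dotProduct, smul_eq_mul]
    at e₁ e₂ qGx qGy qHp qHm hN
  rw [abs_le]
  constructor <;> nlinarith

lemma half_le_sq_of_symmPencil (hG : G.IsHermitian) (hH : H.IsHermitian)
    (hW : (G + H).PosSemidef)
    (h₁ : G *ᵥ x + H *ᵥ y = lam • ((G + H) *ᵥ x))
    (h₂ : H *ᵥ x - G *ᵥ y = lam • ((G + H) *ᵥ y))
    (hN : 0 < x ⬝ᵥ ((G + H) *ᵥ x) + y ⬝ᵥ ((G + H) *ᵥ y)) : 1 / 2 ≤ lam ^ 2 := by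
  have e₁x := congrArg (x ⬝ᵥ ·) h₁
  have e₁y := congrArg (y ⬝ᵥ ·) h₁
  have e₂x := congrArg (x ⬝ᵥ ·) h₂
  have e₂y := congrArg (y ⬝ᵥ ·) h₂
  have q₁ := hW.dotProduct_mulVec_nonneg ((2 * lam - 1) • x - y)
  have q₂ := hW.dotProduct_mulVec_nonneg ((2 * lam + 1) • y - x)
  have sG := hG.dotProduct_mulVec_comm x y
  have sH := hH.dotProduct_mulVec_comm x y
  simp only [star_trivial, dotProduct_add, dotProduct_sub, dotProduct_smul, add_mulVec,
    mulVec_sub, mulVec_smul, sub_dotProduct, smul_dotProduct, smul_eq_mul]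
    at e₁x e₁y e₂x e₂y q₁ q₂ sG sH hN
  nlinarith

end SymmetricPencil

section SchurBlock

variable {K M : Matrix ι ι ℝ} {β₁ β₂ γ lam : ℝ}

lemma symmPencil_of_schurBlock {x y : ι → ℝ} (hsign : β₁ * β₂ < 0) (hγ : γ ^ 2 = -(β₁ * β₂))
    (h : fromBlocks (|β₂| • K) ((-(β₁ * |β₂|)) • M) ((|β₁| * β₂) • M) (-(|β₁| • K)) *ᵥ
        Sum.elim x y =
      lam • (fromBlocks (|β₂| • (K + γ • M)) 0 0 (|β₁| • (K + γ • M)) *ᵥ Sum.elim x y)) :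
    K *ᵥ x + (γ • M) *ᵥ ((-β₁ / γ) • y) = lam • ((K + γ • M) *ᵥ x) ∧
      (γ • M) *ᵥ x - K *ᵥ ((-β₁ / γ) • y) = lam • ((K + γ • M) *ᵥ ((-β₁ / γ) • y)) := by
  have hβ₁ : 0 < |β₁| := abs_pos.2 (left_ne_zero_of_mul hsign.ne)
  have hβ₂ : 0 < |β₂| := abs_pos.2 (right_ne_zero_of_mul hsign.ne)
  have hγ₀ : γ ≠ 0 := by rintro rfl; nlinarith
  constructor <;> ext i
  · have row := congrFun h (Sum.inl i)
    simp only [fromBlocks_mulVec, Sum.elim_inl, Sum.elim_comp_inl, Sum.elim_comp_inr,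
      Pi.add_apply, Pi.smul_apply, smul_mulVec, mulVec_smul, add_mulVec, smul_eq_mul,
      zero_mulVec, add_zero] at row ⊢
    field_simp
    exact mul_left_cancel₀ hβ₂.ne' (by linear_combination row)
  · have row := congrFun h (Sum.inr i)
    simp only [fromBlocks_mulVec, Sum.elim_inr, Sum.elim_comp_inl, Sum.elim_comp_inr,
      Pi.add_apply, Pi.sub_apply, Pi.smul_apply, smul_mulVec, mulVec_smul, add_mulVec,
      neg_mulVec, smul_eq_mul, zero_mulVec, zero_add, Pi.neg_apply] at row ⊢
    field_simp
    refine mul_left_cancel₀ hβ₁.ne' ?_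
    linear_combination (-β₁) * row + |β₁| * (M *ᵥ x) i * hγ

lemma half_le_sq_and_abs_le_one_of_schurBlock (hK : K.PosDef) (hM : M.PosDef)
    (hsign : β₁ * β₂ < 0) (hγ₀ : 0 < γ) (hγ : γ ^ 2 = -(β₁ * β₂)) {u : ι ⊕ ι → ℝ}
    (hu : u ≠ 0)
    (h : fromBlocks (|β₂| • K) ((-(β₁ * |β₂|)) • M) ((|β₁| * β₂) • M) (-(|β₁| • K)) *ᵥ u =
      lam • (fromBlocks (|β₂| • (K + γ • M)) 0 0 (|β₁| • (K + γ • M)) *ᵥ u)) :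
    1 / 2 ≤ lam ^ 2 ∧ |lam| ≤ 1 := by
  rw [← Sum.elim_comp_inl_inr u] at h hu
  obtain ⟨h₁, h₂⟩ := symmPencil_of_schurBlock hsign hγ h
  have hH : (γ • M).PosDef := hM.smul hγ₀
  have hscale : -β₁ / γ ≠ 0 := div_ne_zero (neg_ne_zero.2 (left_ne_zero_of_mul hsign.ne)) hγ₀.ne'
  have hxy : u ∘ Sum.inl ≠ 0 ∨ (-β₁ / γ) • (u ∘ Sum.inr) ≠ 0 := by
    rw [smul_ne_zero_iff_right hscale, ← not_and_or]
    rintro ⟨hx, hy⟩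
    exact hu (by rw [hx, hy]; exact Sum.elim_zero_zero)
  have hN := (hK.add hH).dotProduct_mulVec_add_pos_s11 hxy
  exact ⟨half_le_sq_of_symmPencil hK.1 hH.1 (hK.add hH).posSemidef h₁ h₂ hN,
    abs_le_one_of_symmPencil hK.posSemidef hH.posSemidef h₁ h₂ hN⟩

end SchurBlock

theorem stmt_11_general (n : ℕ) (Kx Mx : Matrix (Fin n) (Fin n) ℝ)
    (hKx : Kx.PosDef) (hMx : Mx.PosDef) (α β₁ β₂ : ℝ) (hα : 0 < α)
    (hsign : β₁ * β₂ < 0)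
    (𝒦 : Matrix (Fin n) (Fin n) ℝ) (h𝒦 : 𝒦 = Kx + α • Mx)
    (γ : ℝ) (hγ : γ = Real.sqrt |β₁ * β₂|)
    (Abar P : Matrix (Fin n ⊕ Fin n) (Fin n ⊕ Fin n) ℝ)
    (hAbar : Abar = Matrix.fromBlocks (|β₂| • 𝒦) ((-(β₁ * |β₂|)) • Mx)
      ((|β₁| * β₂) • Mx) (-(|β₁| • 𝒦)))
    (hP : P = Matrix.fromBlocks (|β₂| • (𝒦 + γ • Mx)) 0 0 (|β₁| • (𝒦 + γ • Mx))) :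
    (∀ lam : ℝ, (∃ u : Fin n ⊕ Fin n → ℝ, u ≠ 0 ∧ Abar *ᵥ u = lam • (P *ᵥ u)) →
      1 / Real.sqrt 2 ≤ |lam| ∧ |lam| ≤ 1) ∧
    (∀ lam mu : ℝ,
      (∃ u : Fin n ⊕ Fin n → ℝ, u ≠ 0 ∧ Abar *ᵥ u = lam • (P *ᵥ u)) →
      (∃ u : Fin n ⊕ Fin n → ℝ, u ≠ 0 ∧ Abar *ᵥ u = mu • (P *ᵥ u)) →
      |lam| ≤ Real.sqrt 2 * |mu|) := by
  have h𝒦pd : 𝒦.PosDef := h𝒦 ▸ hKx.add (hMx.smul hα)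
  have hγ₀ : 0 < γ := hγ ▸ Real.sqrt_pos.2 (abs_pos.2 hsign.ne)
  have hγsq : γ ^ 2 = -(β₁ * β₂) := by
    rw [hγ, Real.sq_sqrt (abs_nonneg _), abs_of_neg hsign]
  have bounds : ∀ lam : ℝ, (∃ u : Fin n ⊕ Fin n → ℝ, u ≠ 0 ∧ Abar *ᵥ u = lam • (P *ᵥ u)) →
      1 / Real.sqrt 2 ≤ |lam| ∧ |lam| ≤ 1 := by
    rintro lam ⟨u, hu, h⟩
    subst hAbar hP
    obtain ⟨hlow, hup⟩ :=
      half_le_sq_and_abs_le_one_of_schurBlock h𝒦pd hMx hsign hγ₀ hγsq hu h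
    refine ⟨?_, hup⟩
    rw [← Real.sqrt_sq_eq_abs, one_div, ← Real.sqrt_inv, ← one_div]
    exact Real.sqrt_le_sqrt hlow
  refine ⟨bounds, fun lam mu hlam hmu => ?_⟩
  calc |lam| ≤ 1 := (bounds lam hlam).2
    _ = Real.sqrt 2 * (1 / Real.sqrt 2) := by field_simp
    _ ≤ Real.sqrt 2 * |mu| := by gcongr; exact (bounds mu hmu).1

/-- Preconditioner for the real Schur decomposition case: with `𝒦 = K_x + α M_x`,
`γ = √|β₁β₂|`, `Ā = [[|β₂|𝒦, −β₁|β₂| M_x],[|β₁|β₂ M_x, −|β₁|𝒦]]` and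
`P = diag(|β₂|(𝒦 + γ M_x), |β₁|(𝒦 + γ M_x))`, every generalized eigenvalue `λ` of the
pencil `(Ā, P)` satisfies `1/√2 ≤ |λ| ≤ 1`; consequently `cond(P⁻¹Ā) ≤ √2`. -/
theorem stmt_11 (n : ℕ) (Kx Mx : Matrix (Fin n) (Fin n) ℝ)
    (hKx : Kx.PosDef) (hMx : Mx.PosDef) (α β₁ β₂ : ℝ) (hα : 0 < α)
    (hβ₁ : β₁ ≠ 0) (hβ₂ : β₂ ≠ 0) (hsign : β₁ * β₂ < 0)
    (𝒦 : Matrix (Fin n) (Fin n) ℝ) (h𝒦 : 𝒦 = Kx + α • Mx)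
    (γ : ℝ) (hγ : γ = Real.sqrt |β₁ * β₂|)
    (Abar P : Matrix (Fin n ⊕ Fin n) (Fin n ⊕ Fin n) ℝ)
    (hAbar : Abar = Matrix.fromBlocks (|β₂| • 𝒦) ((-(β₁ * |β₂|)) • Mx)
      ((|β₁| * β₂) • Mx) (-(|β₁| • 𝒦)))
    (hP : P = Matrix.fromBlocks (|β₂| • (𝒦 + γ • Mx)) 0 0 (|β₁| • (𝒦 + γ • Mx))) :
    (∀ lam : ℝ, (∃ u : Fin n ⊕ Fin n → ℝ, u ≠ 0 ∧ Abar *ᵥ u = lam • (P *ᵥ u)) →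
      1 / Real.sqrt 2 ≤ |lam| ∧ |lam| ≤ 1) ∧
    (∀ lam mu : ℝ,
      (∃ u : Fin n ⊕ Fin n → ℝ, u ≠ 0 ∧ Abar *ᵥ u = lam • (P *ᵥ u)) →
      (∃ u : Fin n ⊕ Fin n → ℝ, u ≠ 0 ∧ Abar *ᵥ u = mu • (P *ᵥ u)) →
      |lam| ≤ Real.sqrt 2 * |mu|) :=
  stmt_11_general n Kx Mx hKx hMx α β₁ β₂ hα hsign 𝒦 h𝒦 γ hγ Abar P hAbar hP
end

section
/- Let N ≥ 3, β ∈ ℝ, and let z = (z₁, …, z_N) ∈ ℂ^N satisfy the recurrence z₁ + z₂ = iβ(2z₁ + z₂) and −z_{i−1} + z_{i+1} = iβ(z_{i−1} + 4z_i + z_{i+1}) for i = 2, …, N−1. If z₁ = 0, then z = 0. In particular, the pencil (K_t, M_t) for B-splines of degree p = 1 on a uniform knot vector admits no eigenvector, corresponding to a purely imaginary eigenvalue, whose first and last coefficients vanish. -/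
/-- For `N ≥ 3`, `β ∈ ℝ` and `z ∈ ℂ^N` (indexed `1,…,N`) satisfying the recurrence
`z₁ + z₂ = iβ(2z₁ + z₂)` and `−z_{i−1} + z_{i+1} = iβ(z_{i−1} + 4z_i + z_{i+1})` for
`i = 2,…,N−1`: if `z₁ = 0`, then `z = 0`.  Hence the pencil `(K_t, M_t)` for B-splines
of degree `p = 1` on a uniform knot vector admits no eigenvector, corresponding to a
purely imaginary eigenvalue, whose first and last coefficients vanish. -/
theorem stmt_14 (N : ℕ) (hN : 3 ≤ N) (β : ℝ) (z : ℕ → ℂ)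
    (h1 : z 1 + z 2 = Complex.I * (β : ℂ) * (2 * z 1 + z 2))
    (hrec : ∀ i, 2 ≤ i → i ≤ N - 1 →
      -z (i - 1) + z (i + 1) = Complex.I * (β : ℂ) * (z (i - 1) + 4 * z i + z (i + 1)))
    (hz1 : z 1 = 0) :
    ∀ i, 1 ≤ i → i ≤ N → z i = 0 := by
  have hne : (1 : ℂ) - Complex.I * (β : ℂ) ≠ 0 := by
    intro h
    have h' := congrArg Complex.re h
    simp [Complex.sub_re, Complex.mul_re] at h'
  have hz2 : z 2 = 0 := by
    rw [hz1] at h1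
    have h2 : (1 - Complex.I * (β : ℂ)) * z 2 = 0 := by linear_combination h1
    rcases mul_eq_zero.mp h2 with h' | h'
    · exact absurd h' hne
    · exact h'
  intro i
  induction i using Nat.strong_induction_on with
  | _ i ih =>
    intro hi1 hiN
    match i, hi1 with
    | 1, _ => exact hz1
    | 2, _ => exact hz2
    | (k+3), _ =>
      have hk1 : z (k+1) = 0 := ih (k+1) (by omega) (by omega) (by omega)
      have hk2 : z (k+2) = 0 := ih (k+2) (by omega) (by omega) (by omega)
      have h := hrec (k+2) (by omega) (by omega)
      have e1 : k + 2 - 1 = k + 1 := rfl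
      have e2 : k + 2 + 1 = k + 3 := rfl
      rw [e1, e2, hk1, hk2] at h
      have h3 : (1 - Complex.I * (β : ℂ)) * z (k+3) = 0 := by linear_combination h
      rcases mul_eq_zero.mp h3 with h' | h'
      · exact absurd h' hne
      · exact h'
end

section
/- Let 𝒜 be a real n×n matrix, and let M₀, M₁, N₀, N₁ be real symmetric positive definite n×n matrices. Suppose there are constants 0 < c̲₀ ≤ c̄₀ and 0 < c̲₁ ≤ c̄₁ such that c̲₀‖u‖_{M₀} ≤ ‖𝒜u‖_{N₀} ≤ c̄₀‖u‖_{M₀} and c̲₁‖u‖_{M₁} ≤ ‖𝒜u‖_{N₁} ≤ c̄₁‖u‖_{M₁} for all u ∈ ℝⁿ, where ‖v‖_M := √(vᵀMv). Then, with the geometric means M_{1/2} := M₀^{1/2}(M₀^{−1/2}M₁M₀^{−1/2})^{1/2}M₀^{1/2} and N_{1/2} := N₀^{1/2}(N₀^{−1/2}N₁N₀^{−1/2})^{1/2}N₀^{1/2}, it holds that √(c̲₀ c̲₁) ‖u‖_{M_{1/2}} ≤ ‖𝒜u‖_{N_{1/2}} ≤ √(c̄₀ c̄₁) ‖u‖_{M_{1/2}}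 for all u ∈ ℝⁿ. (Operator interpolation theorem for the case ϑ = 1/2.) -/
/-!
Write `M₀ = S²`, `M₁ = S G² S`, `N₀ = T²`, `N₁ = T H² T` and `X = T 𝒜`. In the Loewner order the
hypotheses read `c₀² S² ≤ XᴴX ≤ C₀² S²` and `c₁² S G² S ≤ Xᴴ H² X ≤ C₁² S G² S`, and the claim is
`c₀c₁ S G S ≤ Xᴴ H X ≤ C₀C₁ S G S`. Substituting `B = X S⁻¹`, the upper bound becomes: if
`BᴴB ≤ C₀²` and `Bᴴ H² B ≤ C₁² G²`, then `Bᴴ H B ≤ C₀C₁ G`. This holds because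
`(BᴴHB)² = BᴴH (BBᴴ) HB ≤ C₀² Bᴴ H² B ≤ (C₀C₁ G)²` and the square root is operator monotone.
The lower bound is the upper bound with the roles of `(S, G)` and `(X, H)` exchanged; `X` is
invertible because `XᴴX ≥ c₀² S²`.
-/

open Matrix
open scoped MatrixOrder

theorem IsUnit.star_left_conjugate_le_conjugate_iff {R : Type*} [Ring R] [PartialOrder R]
    [StarRing R] [StarOrderedRing R] {u a b : R} (hu : IsUnit u) :
    star u * a * u ≤ star u * b * u ↔ a ≤ b := by
  rw [← sub_nonneg, ← sub_mul, ← mul_sub, hu.star_left_conjugate_nonneg_iff, sub_nonneg]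

namespace Matrix

variable {ι : Type*} [Fintype ι]

theorem le_iff_forall_dotProduct_mulVec_le {A B : Matrix ι ι ℝ} (hA : A.IsHermitian)
    (hB : B.IsHermitian) : A ≤ B ↔ ∀ x, x ⬝ᵥ (A *ᵥ x) ≤ x ⬝ᵥ (B *ᵥ x) := by
  simp only [le_iff, posSemidef_iff_dotProduct_mulVec, hB.sub hA, true_and, star_trivial,
    sub_mulVec, dotProduct_sub, sub_nonneg]

theorem dotProduct_mulVec_conjTranspose_mul_mul (A C : Matrix ι ι ℝ) (x : ι → ℝ) :
    x ⬝ᵥ ((Cᴴ * A * C) *ᵥ x) = (C *ᵥ x) ⬝ᵥ (A *ᵥ (C *ᵥ x)) := by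
  rw [← mulVec_mulVec, ← mulVec_mulVec, dotProduct_mulVec, conjTranspose_eq_transpose_of_trivial,
    vecMul_transpose]

theorem IsHermitian.dotProduct_mul_self_mulVec {A : Matrix ι ι ℝ} (hA : A.IsHermitian)
    (x : ι → ℝ) : x ⬝ᵥ ((A * A) *ᵥ x) = (A *ᵥ x) ⬝ᵥ (A *ᵥ x) := by
  rw [← mulVec_mulVec, dotProduct_mulVec, ← mulVec_transpose,
    ← conjTranspose_eq_transpose_of_trivial, hA.eq]

theorem forall_sqrt_dotProduct_bounds_iff {M N A : Matrix ι ι ℝ} {c C : ℝ} (hc : 0 ≤ c)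
    (hC : 0 ≤ C) (hM : M.PosSemidef) (hN : N.PosSemidef) :
    (∀ u, c * √(u ⬝ᵥ (M *ᵥ u)) ≤ √((A *ᵥ u) ⬝ᵥ (N *ᵥ (A *ᵥ u))) ∧
        √((A *ᵥ u) ⬝ᵥ (N *ᵥ (A *ᵥ u))) ≤ C * √(u ⬝ᵥ (M *ᵥ u))) ↔
      c ^ 2 • M ≤ Aᴴ * N * A ∧ Aᴴ * N * A ≤ C ^ 2 • M := by
  rw [le_iff_forall_dotProduct_mulVec_le (hM.smul (sq_nonneg c)).1
      (hN.conjTranspose_mul_mul_same A).1,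
    le_iff_forall_dotProduct_mulVec_le (hN.conjTranspose_mul_mul_same A).1
      (hM.smul (sq_nonneg C)).1, ← forall_and]
  refine forall_congr' fun u => ?_
  have hMu : 0 ≤ u ⬝ᵥ (M *ᵥ u) := by simpa using hM.dotProduct_mulVec_nonneg u
  have hNu : 0 ≤ (A *ᵥ u) ⬝ᵥ (N *ᵥ (A *ᵥ u)) := by
    simpa only [star_trivial] using hN.dotProduct_mulVec_nonneg (A *ᵥ u)
  rw [Real.le_sqrt (by positivity) hNu, Real.sqrt_le_left (by positivity), mul_pow, mul_pow,
    Real.sq_sqrt hMu, dotProduct_mulVec_conjTranspose_mul_mul, smul_mulVec, smul_mulVec,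
    dotProduct_smul, dotProduct_smul, smul_eq_mul, smul_eq_mul]

variable [DecidableEq ι]

theorem eq_mul_mul_of_eq_inv_mul_inv {S K N : Matrix ι ι ℝ} (hS : IsUnit S)
    (h : K = S⁻¹ * N * S⁻¹) : N = S * K * S := by
  have hS' := (isUnit_iff_isUnit_det S).1 hS
  rw [h, mul_assoc, nonsing_inv_mul_cancel_right _ _ hS', mul_nonsing_inv_cancel_left _ _ hS']

theorem isUnit_of_posDef_le_conjTranspose_mul_self {P X : Matrix ι ι ℝ} (hP : P.PosDef)
    (h : P ≤ Xᴴ * X) : IsUnit X := by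
  have hXX : (Xᴴ * X).PosDef := by simpa using hP.add_posSemidef h
  exact isUnit_of_mul_isUnit_right hXX.isUnit

theorem le_of_mul_self_le_mul_self {A B : Matrix ι ι ℝ} (hA : A.IsHermitian)
    (hB : B.PosSemidef) (h : A * A ≤ B * B) : A ≤ B := by
  have hD : (B - A).IsHermitian := hB.1.sub hA
  rw [le_iff, hD.posSemidef_iff_eigenvalues_nonneg]
  intro i
  show 0 ≤ hD.eigenvalues i
  set v : ι → ℝ := ⇑(hD.eigenvectorBasis i)
  set μ := hD.eigenvalues i
  have hAv : A *ᵥ v = B *ᵥ v - μ • v := by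
    rw [← hD.mulVec_eigenvectorBasis i, sub_mulVec, sub_sub_cancel]
  have hv : v ⬝ᵥ v = 1 := by
    have h1 : inner ℝ (hD.eigenvectorBasis i) (hD.eigenvectorBasis i) = 1 := by
      rw [real_inner_self_eq_norm_sq, hD.eigenvectorBasis.orthonormal.1 i, one_pow]
    rwa [EuclideanSpace.inner_eq_star_dotProduct, star_trivial] at h1
  have hBv : 0 ≤ v ⬝ᵥ (B *ᵥ v) := by simpa using hB.dotProduct_mulVec_nonneg v
  have hsq := h.dotProduct_mulVec_nonneg v
  rw [star_trivial, sub_mulVec, dotProduct_sub, sub_nonneg, hA.dotProduct_mul_self_mulVec,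
    hB.1.dotProduct_mul_self_mulVec, hAv] at hsq
  simp only [sub_dotProduct, dotProduct_sub, smul_dotProduct, dotProduct_smul, smul_eq_mul,
    dotProduct_comm (B *ᵥ v) v, hv] at hsq
  -- `hsq` now reads `μ² ≤ 2μ ⟪v, Bv⟫`, which rules out `μ < 0`
  nlinarith

theorem mul_conjTranspose_le_sq_smul_one {B : Matrix ι ι ℝ} {a : ℝ} (h : Bᴴ * B ≤ a ^ 2 • 1) :
    B * Bᴴ ≤ a ^ 2 • 1 := by
  set P := B * Bᴴ
  set c := a ^ 2 / 2
  -- `P² ≤ a² P` says `(P - c)² ≤ c²`; take square roots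
  have hPP : P * P ≤ a ^ 2 • P := by
    simpa [P, mul_assoc, star_eq_conjTranspose] using star_right_conjugate_le_conjugate h B
  have hsq : (P - c • 1) * (P - c • 1) = P * P - a ^ 2 • P + (c • 1) * (c • 1) := by
    simp only [sub_mul, mul_sub, smul_mul_assoc, mul_smul_comm, one_mul, mul_one, c]
    module
  have hP : (P - c • 1).IsHermitian :=
    (isHermitian_mul_conjTranspose_self B).sub (isHermitian_one.smul (IsSelfAdjoint.all _))
  have := le_of_mul_self_le_mul_self hP (PosSemidef.one.smul (by positivity : (0 : ℝ) ≤ c)) (by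
    rw [hsq]
    calc P * P - a ^ 2 • P + (c • 1) * (c • 1) ≤ a ^ 2 • P - a ^ 2 • P + (c • 1) * (c • 1) := by
          gcongr
      _ = (c • 1) * (c • 1) := by abel)
  rwa [sub_le_iff_le_add, ← add_smul, add_halves] at this

theorem conjTranspose_mul_mul_le_of_sq_bounds {B G H : Matrix ι ι ℝ} {a b : ℝ}
    (hG : G.PosSemidef) (hH : H.PosSemidef) (ha : 0 ≤ a) (hb : 0 ≤ b)
    (h₀ : Bᴴ * B ≤ a ^ 2 • 1) (h₁ : Bᴴ * (H * H) * B ≤ b ^ 2 • (G * G)) :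
    Bᴴ * H * B ≤ (a * b) • G := by
  refine le_of_mul_self_le_mul_self (hH.conjTranspose_mul_mul_same B).1
    (hG.smul (mul_nonneg ha hb)) ?_
  calc Bᴴ * H * B * (Bᴴ * H * B) = star (H * B) * (B * Bᴴ) * (H * B) := by
        simp only [star_eq_conjTranspose, conjTranspose_mul, hH.1.eq, mul_assoc]
    _ ≤ star (H * B) * (a ^ 2 • 1) * (H * B) :=
        star_left_conjugate_le_conjugate (mul_conjTranspose_le_sq_smul_one h₀) _
    _ = a ^ 2 • (Bᴴ * (H * H) * B) := by
        simp only [star_eq_conjTranspose, conjTranspose_mul, hH.1.eq, mul_smul_comm,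
          smul_mul_assoc, mul_one, mul_assoc]
    _ ≤ a ^ 2 • (b ^ 2 • (G * G)) := smul_le_smul_of_nonneg_left h₁ (sq_nonneg a)
    _ = (a * b) • G * ((a * b) • G) := by
        rw [smul_mul_smul_comm, smul_smul]; congr 1; ring

theorem conjTranspose_mul_mul_le_of_sq_bounds_of_isUnit {X Y G H : Matrix ι ι ℝ} {a b : ℝ}
    (hY : IsUnit Y) (hG : G.PosSemidef) (hH : H.PosSemidef) (ha : 0 ≤ a) (hb : 0 ≤ b)
    (h₀ : Xᴴ * X ≤ a ^ 2 • (Yᴴ * Y)) (h₁ : Xᴴ * (H * H) * X ≤ b ^ 2 • (Yᴴ * (G * G) * Y)) :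
    Xᴴ * H * X ≤ (a * b) • (Yᴴ * G * Y) := by
  obtain ⟨B, rfl⟩ : ∃ B, X = B * Y := ⟨X * Y⁻¹, by
    rw [nonsing_inv_mul_cancel_right _ _ ((isUnit_iff_isUnit_det Y).1 hY)]⟩
  have hconj : ∀ K : Matrix ι ι ℝ, (B * Y)ᴴ * K * (B * Y) = star Y * (Bᴴ * K * B) * Y := by
    intro K; simp only [star_eq_conjTranspose, conjTranspose_mul, mul_assoc]
  have hsmul : ∀ (c : ℝ) (K : Matrix ι ι ℝ), c • (Yᴴ * K * Y) = star Y * (c • K) * Y := by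
    intro c K; rw [star_eq_conjTranspose, mul_smul_comm, smul_mul_assoc]
  rw [← mul_one (B * Y)ᴴ, ← mul_one Yᴴ, hconj, hsmul, hY.star_left_conjugate_le_conjugate_iff,
    mul_one] at h₀
  rw [hconj, hsmul, hY.star_left_conjugate_le_conjugate_iff] at h₁ ⊢
  exact conjTranspose_mul_mul_le_of_sq_bounds hG hH ha hb h₀ h₁

theorem le_conjTranspose_mul_mul_of_sq_bounds {X Y G H : Matrix ι ι ℝ} {a b : ℝ}
    (hY : IsUnit Y) (hG : G.PosSemidef) (hH : H.PosSemidef) (ha : 0 < a) (hb : 0 < b)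
    (h₀ : a ^ 2 • (Yᴴ * Y) ≤ Xᴴ * X) (h₁ : b ^ 2 • (Yᴴ * (G * G) * Y) ≤ Xᴴ * (H * H) * X) :
    (a * b) • (Yᴴ * G * Y) ≤ Xᴴ * H * X := by
  have hX : IsUnit X := isUnit_of_posDef_le_conjTranspose_mul_self
    ((PosDef.conjTranspose_mul_self Y (mulVec_injective_iff_isUnit.2 hY)).smul (by positivity)) h₀
  rw [← le_inv_smul_iff_of_pos (by positivity), mul_inv]
  rw [← le_inv_smul_iff_of_pos (by positivity), ← inv_pow] at h₀ h₁
  exact conjTranspose_mul_mul_le_of_sq_bounds_of_isUnit hX hH hG (by positivity) (by positivity)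
    h₀ h₁

end Matrix

/-- Operator interpolation theorem for `ϑ = 1/2`: if
`c̲₀‖u‖_{M₀} ≤ ‖𝒜u‖_{N₀} ≤ c̄₀‖u‖_{M₀}` and `c̲₁‖u‖_{M₁} ≤ ‖𝒜u‖_{N₁} ≤ c̄₁‖u‖_{M₁}`
for all `u`, then `√(c̲₀c̲₁)‖u‖_{M_{1/2}} ≤ ‖𝒜u‖_{N_{1/2}} ≤ √(c̄₀c̄₁)‖u‖_{M_{1/2}}`,
where `M_{1/2} = [M₀,M₁]_{1/2}` and `N_{1/2} = [N₀,N₁]_{1/2}` are the geometric means,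
expressed as `M_{1/2} = S·G·S` with `S`, `G` the positive semidefinite square roots
characterized by `S * S = M₀`, `G * G = S⁻¹ * M₁ * S⁻¹` (and analogously `T`, `H`). -/
theorem stmt_17 (n : ℕ) (𝒜 M₀ M₁ N₀ N₁ : Matrix (Fin n) (Fin n) ℝ)
    (hM₀ : M₀.PosDef) (hM₁ : M₁.PosDef) (hN₀ : N₀.PosDef) (hN₁ : N₁.PosDef)
    (c₀ c₁ C₀ C₁ : ℝ) (hc₀ : 0 < c₀) (hc₁ : 0 < c₁) (hcC₀ : c₀ ≤ C₀) (hcC₁ : c₁ ≤ C₁)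
    (h₀ : ∀ u : Fin n → ℝ,
      c₀ * Real.sqrt (u ⬝ᵥ (M₀ *ᵥ u)) ≤ Real.sqrt ((𝒜 *ᵥ u) ⬝ᵥ (N₀ *ᵥ (𝒜 *ᵥ u))) ∧
      Real.sqrt ((𝒜 *ᵥ u) ⬝ᵥ (N₀ *ᵥ (𝒜 *ᵥ u))) ≤ C₀ * Real.sqrt (u ⬝ᵥ (M₀ *ᵥ u)))
    (h₁ : ∀ u : Fin n → ℝ,
      c₁ * Real.sqrt (u ⬝ᵥ (M₁ *ᵥ u)) ≤ Real.sqrt ((𝒜 *ᵥ u) ⬝ᵥ (N₁ *ᵥ (𝒜 *ᵥ u))) ∧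
      Real.sqrt ((𝒜 *ᵥ u) ⬝ᵥ (N₁ *ᵥ (𝒜 *ᵥ u))) ≤ C₁ * Real.sqrt (u ⬝ᵥ (M₁ *ᵥ u)))
    (S G T H : Matrix (Fin n) (Fin n) ℝ)
    (hS : S.PosSemidef) (hS2 : S * S = M₀)
    (hG : G.PosSemidef) (hG2 : G * G = S⁻¹ * M₁ * S⁻¹)
    (hT : T.PosSemidef) (hT2 : T * T = N₀)
    (hH : H.PosSemidef) (hH2 : H * H = T⁻¹ * N₁ * T⁻¹) :
    ∀ u : Fin n → ℝ,
      Real.sqrt (c₀ * c₁) * Real.sqrt (u ⬝ᵥ ((S * G * S) *ᵥ u))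
        ≤ Real.sqrt ((𝒜 *ᵥ u) ⬝ᵥ ((T * H * T) *ᵥ (𝒜 *ᵥ u))) ∧
      Real.sqrt ((𝒜 *ᵥ u) ⬝ᵥ ((T * H * T) *ᵥ (𝒜 *ᵥ u)))
        ≤ Real.sqrt (C₀ * C₁) * Real.sqrt (u ⬝ᵥ ((S * G * S) *ᵥ u)) := by
  have hC₀ : 0 ≤ C₀ := hc₀.le.trans hcC₀
  have hC₁ : 0 ≤ C₁ := hc₁.le.trans hcC₁
  have hSu : IsUnit S := ((Commute.refl S).isUnit_mul_iff.mp (hS2 ▸ hM₀.isUnit)).1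
  have hTu : IsUnit T := ((Commute.refl T).isUnit_mul_iff.mp (hT2 ▸ hN₀.isUnit)).1
  rw [forall_sqrt_dotProduct_bounds_iff hc₀.le hC₀ hM₀.posSemidef hN₀.posSemidef, ← hS2,
    ← hT2] at h₀
  rw [forall_sqrt_dotProduct_bounds_iff hc₁.le hC₁ hM₁.posSemidef hN₁.posSemidef,
    eq_mul_mul_of_eq_inv_mul_inv hSu hG2, eq_mul_mul_of_eq_inv_mul_inv hTu hH2] at h₁
  rw [forall_sqrt_dotProduct_bounds_iff (Real.sqrt_nonneg _) (Real.sqrt_nonneg _)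
    (by simpa only [hS.1.eq] using hG.conjTranspose_mul_mul_same S)
    (by simpa only [hT.1.eq] using hH.conjTranspose_mul_mul_same T),
    Real.sq_sqrt (by positivity), Real.sq_sqrt (by positivity)]
  have up := conjTranspose_mul_mul_le_of_sq_bounds_of_isUnit (X := T * 𝒜) hSu hG hH hC₀ hC₁
    (by simpa only [conjTranspose_mul, hS.1.eq, hT.1.eq, mul_assoc] using h₀.2)
    (by simpa only [conjTranspose_mul, hS.1.eq, hT.1.eq, mul_assoc] using h₁.2)
  have low := le_conjTranspose_mul_mul_of_sq_bounds (X := T * 𝒜) hSu hG hH hc₀ hc₁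
    (by simpa only [conjTranspose_mul, hS.1.eq, hT.1.eq, mul_assoc] using h₀.1)
    (by simpa only [conjTranspose_mul, hS.1.eq, hT.1.eq, mul_assoc] using h₁.1)
  simp only [conjTranspose_mul, hS.1.eq, hT.1.eq, mul_assoc] at up low ⊢
  exact ⟨low, up⟩
end

section
/- Let β₁, β₂ be nonzero real numbers with β₁β₂ < 0, γ := √(|β₁β₂|), and μ ∈ [0,1]. Then a real number λ satisfies det( [[|β₂|μ, −β₁|β₂| γ⁻¹(1−μ)], [|β₁|β₂ γ⁻¹(1−μ), −|β₁|μ]] − λ·diag(|β₂|, |β₁|) ) = 0 if and only if λ² = μ² + (1−μ)²; in particular every such λ satisfies 1/√2 ≤ |λ| ≤ 1. -/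
/-!
Write `s = |β₁β₂| = γ²`. Because `β₁β₂ < 0`, the product of the off-diagonal entries is
`β₁|β₂| · |β₁|β₂ · γ⁻² (1 - μ)² = -s (1 - μ)²`, so the determinant equals
`s (λ² - μ² - (1 - μ)²)` with `s ≠ 0`. The bounds on `|λ|` come from
`1/2 ≤ μ² + (1 - μ)² ≤ 1` for `μ ∈ [0, 1]`.
-/

open Matrix

noncomputable def reducedSchurMatrix (β₁ β₂ γ μ : ℝ) : Matrix (Fin 2) (Fin 2) ℝ :=
  !![|β₂| * μ, -(β₁ * |β₂|) * γ⁻¹ * (1 - μ); |β₁| * β₂ * γ⁻¹ * (1 - μ), -(|β₁| * μ)]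

def reducedSchurPrecond (β₁ β₂ : ℝ) : Matrix (Fin 2) (Fin 2) ℝ :=
  !![|β₂|, 0; 0, |β₁|]

theorem mul_abs_mul_abs_mul_of_mul_neg {a b : ℝ} (h : a * b < 0) :
    a * |b| * (|a| * b) = -|a * b| ^ 2 := by
  rw [show a * |b| * (|a| * b) = a * b * |a * b| by rw [abs_mul]; ring, abs_of_neg h]
  ring

theorem det_reducedSchurMatrix_sub_smul {β₁ β₂ γ : ℝ} (hsign : β₁ * β₂ < 0)
    (hγ : γ ^ 2 = |β₁ * β₂|) (μ lam : ℝ) :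
    (reducedSchurMatrix β₁ β₂ γ μ - lam • reducedSchurPrecond β₁ β₂).det
      = |β₁ * β₂| * (lam ^ 2 - (μ ^ 2 + (1 - μ) ^ 2)) := by
  have hγ0 : γ ≠ 0 := by
    rintro rfl
    exact abs_ne_zero.mpr hsign.ne (by simpa using hγ.symm)
  have hcross := mul_abs_mul_abs_mul_of_mul_neg hsign
  simp only [reducedSchurMatrix, reducedSchurPrecond, det_fin_two, Matrix.sub_apply,
    Matrix.smul_apply, of_apply, cons_val', cons_val_zero, cons_val_one, empty_val', cons_val_fin_one, smul_eq_mul]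
  rw [abs_mul] at hγ hcross ⊢
  field_simp
  linear_combination (1 - μ) ^ 2 * hcross + (1 - μ) ^ 2 * (|β₁| * |β₂|) * hγ

theorem half_le_sq_add_one_sub_sq (μ : ℝ) : 1 / 2 ≤ μ ^ 2 + (1 - μ) ^ 2 := by
  nlinarith [sq_nonneg (2 * μ - 1)]

theorem sq_add_one_sub_sq_le_one {μ : ℝ} (hμ : μ ∈ Set.Icc (0 : ℝ) 1) :
    μ ^ 2 + (1 - μ) ^ 2 ≤ 1 := by
  nlinarith [hμ.1, hμ.2]

theorem inv_sqrt_two_le_abs_of_half_le_sq {x : ℝ} (h : 1 / 2 ≤ x ^ 2) :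
    1 / Real.sqrt 2 ≤ |x| := by
  rw [← Real.sqrt_sq_eq_abs, one_div, ← Real.sqrt_inv, ← one_div]
  exact Real.sqrt_le_sqrt h

theorem stmt_18_general (β₁ β₂ : ℝ) (hsign : β₁ * β₂ < 0)
    (γ : ℝ) (hγ : γ = Real.sqrt |β₁ * β₂|) (μ : ℝ) (hμ : μ ∈ Set.Icc (0 : ℝ) 1) :
    (∀ lam : ℝ,
      ((!![|β₂| * μ, -(β₁ * |β₂|) * γ⁻¹ * (1 - μ);
           |β₁| * β₂ * γ⁻¹ * (1 - μ), -(|β₁| * μ)] : Matrix (Fin 2) (Fin 2) ℝ)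
        - lam • (!![|β₂|, 0; 0, |β₁|] : Matrix (Fin 2) (Fin 2) ℝ)).det = 0
      ↔ lam ^ 2 = μ ^ 2 + (1 - μ) ^ 2) ∧
    (∀ lam : ℝ, lam ^ 2 = μ ^ 2 + (1 - μ) ^ 2 →
      1 / Real.sqrt 2 ≤ |lam| ∧ |lam| ≤ 1) := by
  refine ⟨fun lam => ?_, fun lam hlam => ?_⟩
  · change (reducedSchurMatrix β₁ β₂ γ μ - lam • reducedSchurPrecond β₁ β₂).det = 0 ↔ _
    rw [det_reducedSchurMatrix_sub_smul hsign (hγ ▸ Real.sq_sqrt (abs_nonneg _)),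
      mul_eq_zero_iff_left (abs_ne_zero.mpr hsign.ne), sub_eq_zero]
  · exact ⟨inv_sqrt_two_le_abs_of_half_le_sq (hlam ▸ half_le_sq_add_one_sub_sq μ),
      (sq_le_one_iff_abs_le_one lam).mp (hlam ▸ sq_add_one_sub_sq_le_one hμ)⟩

/-- The reduced `2×2` generalized eigenvalue computation for the real Schur
decomposition preconditioner: for `β₁β₂ < 0`, `γ = √|β₁β₂|` and `μ ∈ [0,1]`, a real
`λ` makes the determinant vanish iff `λ² = μ² + (1−μ)²`; in particular every such `λ`
satisfies `1/√2 ≤ |λ| ≤ 1`. -/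
theorem stmt_18 (β₁ β₂ : ℝ) (hβ₁ : β₁ ≠ 0) (hβ₂ : β₂ ≠ 0) (hsign : β₁ * β₂ < 0)
    (γ : ℝ) (hγ : γ = Real.sqrt |β₁ * β₂|) (μ : ℝ) (hμ : μ ∈ Set.Icc (0 : ℝ) 1) :
    (∀ lam : ℝ,
      ((!![|β₂| * μ, -(β₁ * |β₂|) * γ⁻¹ * (1 - μ);
           |β₁| * β₂ * γ⁻¹ * (1 - μ), -(|β₁| * μ)] : Matrix (Fin 2) (Fin 2) ℝ)
        - lam • (!![|β₂|, 0; 0, |β₁|] : Matrix (Fin 2) (Fin 2) ℝ)).det = 0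
      ↔ lam ^ 2 = μ ^ 2 + (1 - μ) ^ 2) ∧
    (∀ lam : ℝ, lam ^ 2 = μ ^ 2 + (1 - μ) ^ 2 →
      1 / Real.sqrt 2 ≤ |lam| ∧ |lam| ≤ 1) :=
  stmt_18_general β₁ β₂ hsign γ hγ μ hμ
end
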